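/- arXiv:2302.12488 — 2 statements merged into one kernel-verified Lean document; each statement's English description precedes it below -/
import Mathlib

section
/- Given the jump formula [q] = −c₁ [φ] + c₂ [Dφ] with c₁, c₂ as above, substituting back yields the explicit local formula q_l = D_l φ_l + M_l⁻¹ t_{l,R} ((1/2)(1 − √T_r c₁)(t_{r,L}ᵀφ_r − t_{l,R}ᵀφ_l) + (√T_r/2) c₂ (t_{r,L}ᵀ D_r φ_r − t_{l,R}ᵀ D_l φ_l)), i.e. q_l depends only on φ_l, φ_r, and their derivative traces, not on q_r. -/
open Matrix in
theorem local_gradient_formula_general (n : ℕ) (Tr : ℝ)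
    (Ml Dl Dr : Matrix (Fin n) (Fin n) ℝ)
    (tlR trL : Fin n → ℝ) (φl φr ql qr : Fin n → ℝ)
    (hql : ql = Dl.mulVec φl +
      ((1 / 2) * (trL ⬝ᵥ φr - tlR ⬝ᵥ φl)
        + Real.sqrt Tr / 2 * (trL ⬝ᵥ qr - tlR ⬝ᵥ ql)) • Ml⁻¹.mulVec tlR)
    (c1 c2 : ℝ)
    (hjump : trL ⬝ᵥ qr - tlR ⬝ᵥ ql =
      -c1 * (trL ⬝ᵥ φr - tlR ⬝ᵥ φl)
        + c2 * (trL ⬝ᵥ Dr.mulVec φr - tlR ⬝ᵥ Dl.mulVec φl)) :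
    ql = Dl.mulVec φl +
      ((1 / 2) * (1 - Real.sqrt Tr * c1) * (trL ⬝ᵥ φr - tlR ⬝ᵥ φl)
        + Real.sqrt Tr / 2 * c2 *
          (trL ⬝ᵥ Dr.mulVec φr - tlR ⬝ᵥ Dl.mulVec φl)) • Ml⁻¹.mulVec tlR := by
  rw [hjump] at hql
  rw [hql]
  congr 2
  ring

open Matrix in
/-- Substituting the interface jump formula back yields an explicit local
formula for the discrete gradient `q_l`, independent of `q_r`. -/
theorem local_gradient_formula (n : ℕ) (hn : 1 ≤ n) (Tr : ℝ) (hTr : 0 < Tr)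
    (Ml Mr Dl Dr : Matrix (Fin n) (Fin n) ℝ) (dl dr : Fin n → ℝ)
    (hMl : Ml = Matrix.diagonal dl) (hdl : ∀ i, 0 < dl i)
    (hMr : Mr = Matrix.diagonal dr) (hdr : ∀ i, 0 < dr i)
    (tlR trL : Fin n → ℝ) (φl φr ql qr : Fin n → ℝ)
    (hql : ql = Dl.mulVec φl +
      ((1 / 2) * (trL ⬝ᵥ φr - tlR ⬝ᵥ φl)
        + Real.sqrt Tr / 2 * (trL ⬝ᵥ qr - tlR ⬝ᵥ ql)) • Ml⁻¹.mulVec tlR)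
    (hqr : qr = Dr.mulVec φr -
      (-(1 / 2) * (trL ⬝ᵥ φr - tlR ⬝ᵥ φl)
        + Real.sqrt Tr / 2 * (trL ⬝ᵥ qr - tlR ⬝ᵥ ql)) • Mr⁻¹.mulVec trL)
    (al ar c1 c2 : ℝ)
    (hal : al = tlR ⬝ᵥ Ml⁻¹.mulVec tlR) (har : ar = trL ⬝ᵥ Mr⁻¹.mulVec trL)
    (hc1 : c1 = (1 / 2) * (ar - al) / (1 + Real.sqrt Tr / 2 * (ar + al)))
    (hc2 : c2 = 1 / (1 + Real.sqrt Tr / 2 * (ar + al)))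
    (hjump : trL ⬝ᵥ qr - tlR ⬝ᵥ ql =
      -c1 * (trL ⬝ᵥ φr - tlR ⬝ᵥ φl)
        + c2 * (trL ⬝ᵥ Dr.mulVec φr - tlR ⬝ᵥ Dl.mulVec φl)) :
    ql = Dl.mulVec φl +
      ((1 / 2) * (1 - Real.sqrt Tr * c1) * (trL ⬝ᵥ φr - tlR ⬝ᵥ φl)
        + Real.sqrt Tr / 2 * c2 *
          (trL ⬝ᵥ Dr.mulVec φr - tlR ⬝ᵥ Dl.mulVec φl)) • Ml⁻¹.mulVec tlR :=
  local_gradient_formula_general n Tr Ml Dl Dr tlR trL φl φr ql qr hql c1 c2 hjump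
end

section
/- The coupled two-element system for (q_l, q_r) ∈ ℝ^n × ℝ^n determining the discrete gradient has a unique solution for every choice of data φ_l, φ_r: the linear map (q_l, q_r) ↦ (q_l − M_l⁻¹ t_{l,R} (√T_r/2)(t_{r,L}ᵀq_r − t_{l,R}ᵀq_l), q_r + M_r⁻¹ t_{r,L} (√T_r/2)(t_{r,L}ᵀq_r − t_{l,R}ᵀq_l)) is invertible. -/
open Matrix in
/-- The linear part in `q` of the coupled two-element system is invertible,
so the discrete gradient is uniquely determined by the data. -/
theorem coupled_system_invertible (n : ℕ) (hn : 1 ≤ n) (Tr : ℝ) (hTr : 0 < Tr)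
    (Ml Mr : Matrix (Fin n) (Fin n) ℝ) (dl dr : Fin n → ℝ)
    (hMl : Ml = Matrix.diagonal dl) (hdl : ∀ i, 0 < dl i)
    (hMr : Mr = Matrix.diagonal dr) (hdr : ∀ i, 0 < dr i)
    (tlR trL : Fin n → ℝ) :
    Function.Bijective (fun p : (Fin n → ℝ) × (Fin n → ℝ) =>
      (p.1 - (Real.sqrt Tr / 2 * (trL ⬝ᵥ p.2 - tlR ⬝ᵥ p.1)) • Ml⁻¹.mulVec tlR,
       p.2 + (Real.sqrt Tr / 2 * (trL ⬝ᵥ p.2 - tlR ⬝ᵥ p.1)) • Mr⁻¹.mulVec trL)) := by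
  subst hMl hMr
  set c : ℝ := Real.sqrt Tr / 2 with hc
  have hc0 : 0 ≤ c := by positivity
  have hdiagl : (Matrix.diagonal dl)⁻¹ = Matrix.diagonal (fun i => (dl i)⁻¹) := by
    apply Matrix.inv_eq_right_inv
    rw [Matrix.diagonal_mul_diagonal]
    convert Matrix.diagonal_one
    exact mul_inv_cancel₀ (hdl _).ne'
  have hdiagr : (Matrix.diagonal dr)⁻¹ = Matrix.diagonal (fun i => (dr i)⁻¹) := by
    apply Matrix.inv_eq_right_inv
    rw [Matrix.diagonal_mul_diagonal]
    convert Matrix.diagonal_one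
    exact mul_inv_cancel₀ (hdr _).ne'
  set A : Fin n → ℝ := (Matrix.diagonal dl)⁻¹.mulVec tlR with hA
  set B : Fin n → ℝ := (Matrix.diagonal dr)⁻¹.mulVec trL with hB
  set al : ℝ := tlR ⬝ᵥ A with hal
  set ar : ℝ := trL ⬝ᵥ B with har
  have hal0 : 0 ≤ al := by
    rw [hal, hA, hdiagl]
    apply Finset.sum_nonneg
    intro i _
    simp only [Matrix.mulVec_diagonal]
    have := (hdl i).le
    have : 0 ≤ (dl i)⁻¹ := inv_nonneg.2 this
    nlinarith [sq_nonneg (tlR i)]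
  have har0 : 0 ≤ ar := by
    rw [har, hB, hdiagr]
    apply Finset.sum_nonneg
    intro i _
    simp only [Matrix.mulVec_diagonal]
    have := (hdr i).le
    have : 0 ≤ (dr i)⁻¹ := inv_nonneg.2 this
    nlinarith [sq_nonneg (trL i)]
  set K : ℝ := 1 + c * (al + ar) with hK
  have hK0 : 0 < K := by
    have : 0 ≤ c * (al + ar) := mul_nonneg hc0 (by linarith)
    linarith
  have hKne : K ≠ 0 := ne_of_gt hK0
  rw [Function.bijective_iff_has_inverse]
  refine ⟨fun q => (q.1 + (c * (trL ⬝ᵥ q.2 - tlR ⬝ᵥ q.1) / K) • A,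
                    q.2 - (c * (trL ⬝ᵥ q.2 - tlR ⬝ᵥ q.1) / K) • B), ?_, ?_⟩
  · rintro ⟨p1, p2⟩
    set D : ℝ := trL ⬝ᵥ p2 - tlR ⬝ᵥ p1 with hD
    have key : trL ⬝ᵥ (p2 + (c * D) • B) - tlR ⬝ᵥ (p1 - (c * D) • A) = D * K := by
      simp only [dotProduct_add, dotProduct_sub, dotProduct_smul, smul_eq_mul, ← hal, ← har,
        hK, hD]
      ring
    simp only [← hD, key]
    have ht : c * (D * K) / K = c * D := by field_simp
    rw [ht]
    ext <;> simp
  · rintro ⟨q1, q2⟩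
    set E : ℝ := trL ⬝ᵥ q2 - tlR ⬝ᵥ q1 with hE
    set t : ℝ := c * E / K with htdef
    have key : trL ⬝ᵥ (q2 - t • B) - tlR ⬝ᵥ (q1 + t • A) = E / K := by
      simp only [dotProduct_add, dotProduct_sub, dotProduct_smul, smul_eq_mul, ← hal, ← har]
      rw [htdef, hK]
      field_simp
      ring
    simp only [← hE, key]
    have ht : c * (E / K) = t := by rw [htdef]; ring
    rw [show trL ⬝ᵥ (q2 - (c * E / K) • B) - tlR ⬝ᵥ (q1 + (c * E / K) • A) = E / K from key,
      show c * (E / K) = c * E / K by ring]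
    ext <;> simp
end
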